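/- Let p ∈ ℂ[x,y] and let f be a one-variable polynomial over ℂ of degree greater than 1. Then for every q ∈ ℂ[x,y], the Jacobian determinant D(f(p), q) is not a nonzero constant; in other words, the gradient of f(p(x,y)) cannot form a row of any invertible Jacobian matrix. -/
import Mathlib


open MvPolynomial

/-- `ℂ[x,y]` as multivariate polynomials in two variables. -/
local notation "P" => MvPolynomial (Fin 2) ℂ

/-- The Jacobian determinant `D(u,v) = ∂ₓu·∂ᵧv − ∂ᵧu·∂ₓv`. -/
noncomputable def jacDet (u v : P) : P :=
  pderiv (0 : Fin 2) u * pderiv (1 : Fin 2) v -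
    pderiv (1 : Fin 2) u * pderiv (0 : Fin 2) v

/-- A unit in `MvPolynomial (Fin n) ℂ` is a constant. -/
lemma mvpoly_isUnit_eq_C : ∀ {n : ℕ} (u : MvPolynomial (Fin n) ℂ),
    IsUnit u → ∃ d : ℂ, u = C d := by
  intro n
  induction n with
  | zero => exact fun u _ => ⟨u.coeff 0, u.eq_C_of_isEmpty⟩
  | succ n ih =>
    intro u hu
    have hv : IsUnit (MvPolynomial.finSuccEquiv ℂ n u) := hu.map _
    obtain ⟨r, hr, hru⟩ := Polynomial.isUnit_iff.mp hv
    obtain ⟨d, hd⟩ := ih r hr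
    refine ⟨d, (MvPolynomial.finSuccEquiv ℂ n).injective ?_⟩
    rw [← hru, hd]
    simp [MvPolynomial.finSuccEquiv_apply]

/-- Let `p ∈ ℂ[x,y]` and let `f` be a one-variable polynomial of degree `> 1`.
Then for every `q ∈ ℂ[x,y]` the Jacobian determinant `D(f(p), q)` is not a
nonzero constant. -/
theorem gradient_of_composite_not_jacobian_row (p : P) (f : Polynomial ℂ)
    (hf : 1 < f.natDegree) (q : P) :
    ¬∃ c : ℂ, c ≠ 0 ∧ jacDet (Polynomial.aeval p f) q = C c := by
  rintro ⟨c, hc, h⟩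
  set g := Polynomial.derivative f with hg
  have hgdeg : g.degree ≠ 0 := by
    rw [hg, Polynomial.degree_derivative_eq f (by omega)]
    have : f.natDegree - 1 ≠ 0 := by omega
    exact_mod_cast this
  -- chain rule
  have chain : ∀ i : Fin 2,
      pderiv i (Polynomial.aeval p f) = Polynomial.aeval p g * pderiv i p := by
    intro i
    rw [Derivation.map_aeval (pderiv i) f p, smul_eq_mul]
  have key : Polynomial.aeval p g * jacDet p q = C c := by
    rw [← h]
    simp only [jacDet, chain]
    ring
  -- the constant `C c` is a unit
  have hCc : IsUnit (C c : P) := (Ne.isUnit hc).map (MvPolynomial.C : ℂ →+* P)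
  have hug : IsUnit (Polynomial.aeval p g : P) :=
    isUnit_of_mul_isUnit_left (key ▸ hCc)
  -- `g` has a root `r` since `ℂ` is algebraically closed and `g` is nonconstant
  obtain ⟨r, hr⟩ := IsAlgClosed.exists_root g hgdeg
  obtain ⟨g₁, hg₁⟩ := (Polynomial.dvd_iff_isRoot.mpr hr)
  have hfac : (Polynomial.aeval p g : P) = (p - C r) * Polynomial.aeval p g₁ := by
    rw [hg₁]
    simp [mul_comm, sub_mul]
  have hup : IsUnit (p - C r) := isUnit_of_mul_isUnit_left (hfac ▸ hug)
  -- a unit in `P` is a constant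
  obtain ⟨d, hd⟩ := mvpoly_isUnit_eq_C _ hup
  have hp : p = C (d + r) := by
    rw [map_add]
    linear_combination hd
  -- then `jacDet p q = 0`, contradiction
  have hjz : jacDet p q = 0 := by
    simp [jacDet, hp]
  rw [hjz, mul_zero] at key
  exact hc (by simpa using key.symm)
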